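/- Let φ: ℝ → ℝ be non-injective with φ(0) = 0, and n, ℓ ≥ 1. Define residual networks as compositions G_1 ∘ ... ∘ G_ℓ of residual blocks G_i(x) = φ(W_i x + b_i) + x and feedforward networks as compositions F_1 ∘ ... ∘ F_ℓ of blocks F_i(x) = φ(W_i x + b_i), all with square weight matrices W_i ∈ ℝ^{n×n}. Then the set of ℓ-layer residual network functions differs from the set of ℓ-layer feedforward network functions. -/
import Mathlib


/-- A feedforward block x ↦ φ(Wx + b), φ applied entrywise. -/
def ffBlock {n : ℕ} (φ : ℝ → ℝ) (W : Matrix (Fin n) (Fin n) ℝ) (b : Fin n → ℝ) :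
    (Fin n → ℝ) → (Fin n → ℝ) :=
  fun x i => φ ((W.mulVec x + b) i)

/-- A residual block x ↦ φ(Wx + b) + x. -/
def resBlock {n : ℕ} (φ : ℝ → ℝ) (W : Matrix (Fin n) (Fin n) ℝ) (b : Fin n → ℝ) :
    (Fin n → ℝ) → (Fin n → ℝ) :=
  fun x i => φ ((W.mulVec x + b) i) + x i

/-- Composition G_1 ∘ ... ∘ G_ℓ of a finite family of blocks. -/
def compNet {n ℓ : ℕ} (G : Fin ℓ → ((Fin n → ℝ) → (Fin n → ℝ))) :
    (Fin n → ℝ) → (Fin n → ℝ) :=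
  (List.ofFn G).foldr (· ∘ ·) id

lemma foldr_comp_eq {α : Type*} (l : List (α → α)) (g : α → α) :
    l.foldr (· ∘ ·) g = l.foldr (· ∘ ·) id ∘ g := by
  induction l with
  | nil => rfl
  | cons h t ih => simp [List.foldr_cons, ih, Function.comp_assoc]

lemma ffBlock_not_injective {n : ℕ} (hn : 1 ≤ n) (φ : ℝ → ℝ)
    (hφ : ¬ Function.Injective φ) (W : Matrix (Fin n) (Fin n) ℝ) (b : Fin n → ℝ) :
    ¬ Function.Injective (ffBlock φ W b) := by
  rw [Function.not_injective_iff] at hφ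
  obtain ⟨a, a', hφa, ha⟩ := hφ
  intro hinj
  by_cases hW : Function.Injective W.mulVecLin
  · have hsurj : Function.Surjective W.mulVecLin :=
      (LinearMap.injective_iff_surjective).mp hW
    obtain ⟨x, hx⟩ := hsurj (fun j => a - b j)
    obtain ⟨y, hy⟩ := hsurj (fun j => a' - b j)
    have hxy : x ≠ y := by
      intro h
      apply ha
      have := hx.symm.trans (h ▸ hy)
      have := congrFun this ⟨0, hn⟩
      simpa using this
    apply hxy
    apply hinj
    funext i
    have hxi : W.mulVec x i = a - b i := congrFun hx i
    have hyi : W.mulVec y i = a' - b i := congrFun hy i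
    simp [ffBlock, hxi, hyi, hφa]
  · rw [injective_iff_map_eq_zero] at hW
    push_neg at hW
    obtain ⟨z, hz, hz0⟩ := hW
    apply hz0
    have : z + 0 = (0 : Fin n → ℝ) + 0 := by
      apply hinj
      funext i
      simp [ffBlock, Matrix.mulVecLin] at hz ⊢
      rw [hz]
      simp
    simpa using this

/-- for φ non-injective with φ(0)=0 and n, ℓ ≥ 1, the set of ℓ-layer
residual networks differs from the set of ℓ-layer feedforward networks. -/
theorem stmt_3 (n ℓ : ℕ) (hn : 1 ≤ n) (hℓ : 1 ≤ ℓ)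
    (φ : ℝ → ℝ) (hφ : ¬ Function.Injective φ) (hφ0 : φ 0 = 0) :
    {f : (Fin n → ℝ) → (Fin n → ℝ) |
        ∃ (W : Fin ℓ → Matrix (Fin n) (Fin n) ℝ) (b : Fin ℓ → (Fin n → ℝ)),
          f = compNet (fun i => resBlock φ (W i) (b i))} ≠
    {f : (Fin n → ℝ) → (Fin n → ℝ) |
        ∃ (W : Fin ℓ → Matrix (Fin n) (Fin n) ℝ) (b : Fin ℓ → (Fin n → ℝ)),
          f = compNet (fun i => ffBlock φ (W i) (b i))} := by
  intro hset
  -- identity is a residual net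
  have hid : (id : (Fin n → ℝ) → (Fin n → ℝ)) ∈
      {f : (Fin n → ℝ) → (Fin n → ℝ) |
        ∃ (W : Fin ℓ → Matrix (Fin n) (Fin n) ℝ) (b : Fin ℓ → (Fin n → ℝ)),
          f = compNet (fun i => resBlock φ (W i) (b i))} := by
    refine ⟨fun _ => 0, fun _ => 0, ?_⟩
    have hblk : ∀ i : Fin ℓ, resBlock φ (0 : Matrix (Fin n) (Fin n) ℝ) (0 : Fin n → ℝ)
        = (id : (Fin n → ℝ) → (Fin n → ℝ)) := by
      intro i
      funext x j
      simp [resBlock, Matrix.zero_mulVec, hφ0]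
    unfold compNet
    have : ∀ l : List ((Fin n → ℝ) → (Fin n → ℝ)), (∀ g ∈ l, g = id) →
        l.foldr (· ∘ ·) id = id := by
      intro l
      induction l with
      | nil => intro _; rfl
      | cons h t ih =>
        intro hmem
        rw [List.foldr_cons, hmem h (by simp), ih (fun g hg => hmem g (by simp [hg]))]
        rfl
    refine (this _ ?_).symm
    intro g hg
    rw [List.mem_ofFn] at hg
    obtain ⟨i, rfl⟩ := hg
    exact hblk i
  rw [hset] at hid
  obtain ⟨W, b, hW⟩ := hid
  -- but any ff net is non-injective
  obtain ⟨m, rfl⟩ : ∃ m, ℓ = m + 1 := ⟨ℓ - 1, (Nat.succ_pred_eq_of_pos hℓ).symm⟩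
  have : compNet (fun i => ffBlock φ (W i) (b i)) =
      ((List.ofFn (fun i : Fin m => ffBlock φ (W i.castSucc) (b i.castSucc))).foldr
        (· ∘ ·) id) ∘ ffBlock φ (W (Fin.last m)) (b (Fin.last m)) := by
    unfold compNet
    rw [List.ofFn_succ' (fun i => ffBlock φ (W i) (b i)), List.concat_eq_append,
      List.foldr_append]
    simp only [List.foldr_cons, List.foldr_nil]
    rw [foldr_comp_eq, Function.comp_id]
  have hninj : ¬ Function.Injective (compNet (fun i => ffBlock φ (W i) (b i))) := by
    rw [this]
    intro hinj
    exact ffBlock_not_injective hn φ hφ (W (Fin.last m)) (b (Fin.last m))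
      (Function.Injective.of_comp hinj)
  exact hninj (hW ▸ Function.injective_id)
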